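/- Let F be a nontrivial finite group and let G = F ≀ ℤ be the wreath product with its standard finite symmetric generating set S. Then there exist a constant c > 0 and a sequence (F_n)_{n≥1} of nonempty finite subsets of G such that F_n ⊆ S^n for every n ≥ 1, and |s·F_n △ F_n| ≤ c·|F_n|/n for every s ∈ S and every n ≥ 1 (△ denotes symmetric difference). In other words, G admits a controlled Følner sequence. -/

import Mathlib

open scoped Pointwise

/-- The shift `τ_m` on finitely supported configurations `ℤ →₀ Additive F`,
`(τ_m u)(x) = u (m + x)`, as an additive automorphism. -/
noncomputable def shiftW (F : Type*) [Group F] (m : ℤ) :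
    (ℤ →₀ Additive F) ≃+ (ℤ →₀ Additive F) where
  toFun u := Finsupp.equivMapDomain (Equiv.addLeft (-m)) u
  invFun u := Finsupp.equivMapDomain (Equiv.addLeft m) u
  left_inv u := by ext i; simp [Finsupp.equivMapDomain_apply]
  right_inv u := by ext i; simp [Finsupp.equivMapDomain_apply]
  map_add' u v := by ext i; simp [Finsupp.equivMapDomain_apply]

lemma shiftW_apply (F : Type*) [Group F] (m : ℤ) (u : ℤ →₀ Additive F) (x : ℤ) :
    shiftW F m u x = u (m + x) := by
  simp [shiftW, Finsupp.equivMapDomain_apply]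

lemma shiftW_shiftW (F : Type*) [Group F] (l m : ℤ) (u : ℤ →₀ Additive F) :
    shiftW F l (shiftW F m u) = shiftW F (m + l) u := by
  ext x; simp [shiftW_apply, add_assoc]

lemma shiftW_zero (F : Type*) [Group F] (u : ℤ →₀ Additive F) : shiftW F 0 u = u := by
  ext x; simp [shiftW_apply]

/-- The wreath product `F ≀ ℤ`: pairs `(k, u)` with `k ∈ ℤ` and `u : ℤ → F` finitely
supported (written additively as `ℤ →₀ Additive F`). -/
@[ext] structure WreathZ (F : Type*) [Group F] where
  pos : ℤ
  lamp : ℤ →₀ Additive F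

/-- Group law of `F ≀ ℤ`: `(k,u)(m,v) = (k + m, τ_m u + v)` where `(τ_m u)(x) = u (m + x)`. -/
noncomputable instance (F : Type*) [Group F] : Group (WreathZ F) where
  mul g h := ⟨g.pos + h.pos, shiftW F h.pos g.lamp + h.lamp⟩
  one := ⟨0, 0⟩
  inv g := ⟨-g.pos, shiftW F (-g.pos) (-g.lamp)⟩
  mul_assoc a b c := by
    ext
    · exact add_assoc _ _ _
    · show ((shiftW F c.pos) ((shiftW F b.pos) a.lamp + b.lamp) + c.lamp) _ =
        ((shiftW F (b.pos + c.pos)) a.lamp + ((shiftW F c.pos) b.lamp + c.lamp)) _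
      rw [map_add, shiftW_shiftW, add_assoc]
  one_mul a := by
    ext
    · exact zero_add _
    · show ((shiftW F a.pos) 0 + a.lamp) _ = a.lamp _
      rw [map_zero, zero_add]
  mul_one a := by
    ext
    · exact add_zero _
    · show ((shiftW F 0) a.lamp + 0) _ = a.lamp _
      rw [shiftW_zero, add_zero]
  inv_mul_cancel a := by
    show (⟨-a.pos + a.pos, shiftW F a.pos (shiftW F (-a.pos) (-a.lamp)) + a.lamp⟩ : WreathZ F)
      = ⟨0, 0⟩
    ext
    · exact neg_add_cancel _
    · show ((shiftW F a.pos) ((shiftW F (-a.pos)) (-a.lamp)) + a.lamp) _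
        = (0 : ℤ →₀ Additive F) ‹ℤ›
      rw [shiftW_shiftW, neg_add_cancel, shiftW_zero, neg_add_cancel]

/-- The standard generating set of `F ≀ ℤ`:
lamp generators `{(0,u) : supp u ⊆ {0}}` and walker generators `{(ε,1) : ε ∈ {-1,0,1}}`. -/
def wreathGen (F : Type*) [Group F] : Set (WreathZ F) :=
  {g | g.pos = 0 ∧ ∀ x : ℤ, x ≠ 0 → g.lamp x = 0} ∪
    {g | g.lamp = 0 ∧ g.pos ∈ ({-1, 0, 1} : Set ℤ)}

/-- The Følner set `H_n = { (k,u) : k ∈ [-n,n], supp u ⊆ [-2n,2n] }`. -/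
def wreathH (F : Type*) [Group F] (n : ℕ) : Set (WreathZ F) :=
  {g | g.pos ∈ Set.Icc (-(n : ℤ)) (n : ℤ) ∧
    ∀ x : ℤ, g.lamp x ≠ 0 → x ∈ Set.Icc (-(2 * n : ℤ)) (2 * n : ℤ)}

/-- The Følner set `H'_n = { (k,u) : k ∈ [-2n,2n], supp u ⊆ [-2n,2n] }`. -/
def wreathH' (F : Type*) [Group F] (n : ℕ) : Set (WreathZ F) :=
  {g | g.pos ∈ Set.Icc (-(2 * n : ℤ)) (2 * n : ℤ) ∧
    ∀ x : ℤ, g.lamp x ≠ 0 → x ∈ Set.Icc (-(2 * n : ℤ)) (2 * n : ℤ)}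

open scoped symmDiff

section Aux

variable (F : Type*) [Group F]

lemma WreathZ.mul_def (a b : WreathZ F) :
    a * b = ⟨a.pos + b.pos, shiftW F b.pos a.lamp + b.lamp⟩ := rfl

lemma WreathZ.one_def : (1 : WreathZ F) = ⟨0, 0⟩ := rfl

lemma WreathZ.inv_def (a : WreathZ F) :
    a⁻¹ = ⟨-a.pos, shiftW F (-a.pos) (-a.lamp)⟩ := rfl

lemma shiftW_single (m j : ℤ) (a : Additive F) :
    shiftW F m (Finsupp.single j a) = Finsupp.single (j - m) a := by
  ext x
  rw [shiftW_apply, Finsupp.single_apply, Finsupp.single_apply]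
  by_cases h : j = m + x
  · rw [if_pos h, if_pos (by omega)]
  · rw [if_neg h, if_neg (by omega)]

lemma lampGen_mem (a : Additive F) :
    (⟨0, Finsupp.single 0 a⟩ : WreathZ F) ∈ wreathGen F := by
  left
  refine ⟨rfl, fun x hx => ?_⟩
  exact Finsupp.single_eq_of_ne' (fun h => hx h.symm)

lemma walkerGen_mem (ε : ℤ) (hε : ε ∈ ({-1, 0, 1} : Set ℤ)) :
    (⟨ε, 0⟩ : WreathZ F) ∈ wreathGen F := Or.inr ⟨rfl, hε⟩

lemma one_mem_wreathGen : (1 : WreathZ F) ∈ wreathGen F :=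
  Or.inr ⟨rfl, by right; left; rfl⟩

lemma wreathGen_pow_mono {a b : ℕ} (h : a ≤ b) :
    wreathGen F ^ a ⊆ wreathGen F ^ b :=
  Set.pow_subset_pow subset_rfl (one_mem_wreathGen F) h

lemma walker_nat_mem_pow (t : ℕ) : (⟨(t : ℤ), 0⟩ : WreathZ F) ∈ wreathGen F ^ t := by
  induction t with
  | zero => simp only [Nat.cast_zero, pow_zero, Set.mem_one]; rfl
  | succ t ih =>
      rw [pow_succ]
      have h : (⟨((t + 1 : ℕ) : ℤ), 0⟩ : WreathZ F) = ⟨(t : ℤ), 0⟩ * ⟨1, 0⟩ := by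
        rw [WreathZ.mul_def]
        ext
        · push_cast; ring
        · simp
      rw [h]
      exact Set.mul_mem_mul ih (walkerGen_mem F 1 (by right; right; rfl))

lemma walker_neg_nat_mem_pow (t : ℕ) :
    (⟨-(t : ℤ), 0⟩ : WreathZ F) ∈ wreathGen F ^ t := by
  induction t with
  | zero => simp only [Nat.cast_zero, neg_zero, pow_zero, Set.mem_one]; rfl
  | succ t ih =>
      rw [pow_succ]
      have h : (⟨-((t + 1 : ℕ) : ℤ), 0⟩ : WreathZ F) = ⟨-(t : ℤ), 0⟩ * ⟨-1, 0⟩ := by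
        rw [WreathZ.mul_def]
        ext
        · push_cast; ring
        · simp
      rw [h]
      exact Set.mul_mem_mul ih (walkerGen_mem F (-1) (by left; rfl))

lemma walker_mem_pow (t : ℤ) : (⟨t, 0⟩ : WreathZ F) ∈ wreathGen F ^ t.natAbs := by
  rcases Int.natAbs_eq t with h | h
  · rw [show (⟨t, 0⟩ : WreathZ F) = ⟨(t.natAbs : ℤ), 0⟩ by rw [← h]]
    exact walker_nat_mem_pow F _
  · rw [show (⟨t, 0⟩ : WreathZ F) = ⟨-(t.natAbs : ℤ), 0⟩ by rw [← h]]
    exact walker_neg_nat_mem_pow F _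

/-- The sweeping word: if `u` is supported in `[0, t)` then `(t, τ_t u) ∈ S^(2t)`. -/
lemma sweep_mem_pow (t : ℕ) (u : ℤ →₀ Additive F)
    (hu : ∀ x : ℤ, u x ≠ 0 → 0 ≤ x ∧ x < (t : ℤ)) :
    (⟨(t : ℤ), shiftW F t u⟩ : WreathZ F) ∈ wreathGen F ^ (2 * t) := by
  induction t generalizing u with
  | zero =>
      have hu0 : u = 0 := by
        ext x
        by_contra hx
        have := hu x hx
        omega
      simp only [hu0, map_zero, Nat.cast_zero, mul_zero, pow_zero, Set.mem_one]
      rfl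
  | succ t ih =>
      set u' : ℤ →₀ Additive F := u.erase (t : ℤ) with hu'
      have hu'supp : ∀ x : ℤ, u' x ≠ 0 → 0 ≤ x ∧ x < (t : ℤ) := by
        intro x hx
        rcases eq_or_ne x (t : ℤ) with rfl | hne
        · exact absurd (Finsupp.erase_same) hx
        · rw [hu', Finsupp.erase_ne hne] at hx
          have := hu x hx
          omega
      have key : (⟨((t + 1 : ℕ) : ℤ), shiftW F (t + 1 : ℕ) u⟩ : WreathZ F)
          = ⟨(t : ℤ), shiftW F t u'⟩ * ⟨0, Finsupp.single 0 (u (t : ℤ))⟩ * ⟨1, 0⟩ := by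
        rw [WreathZ.mul_def, WreathZ.mul_def]
        ext
        · show ((t + 1 : ℕ) : ℤ) = (t : ℤ) + 0 + 1
          push_cast; ring
        · show (shiftW F ((t : ℕ) + 1 : ℕ) u) _ = _
          rw [shiftW_zero, add_zero, map_add, shiftW_shiftW, shiftW_single]
          have : u = u' + Finsupp.single (t : ℤ) (u (t : ℤ)) :=
            (Finsupp.erase_add_single (t : ℤ) u).symm
          conv_lhs => rw [this]
          rw [map_add, shiftW_single]
          push_cast
          have h2 : (t : ℤ) - ((t : ℤ) + 1) = -1 := by ring
          rw [h2]
          simp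
          rfl
      rw [key, show 2 * (t + 1) = 2 * t + 1 + 1 by ring, pow_succ, pow_succ]
      exact Set.mul_mem_mul
        (Set.mul_mem_mul (ih u' hu'supp) (lampGen_mem F (u (t : ℤ))))
        (walkerGen_mem F 1 (by right; right; rfl))

/-- The configuration set: lamps supported in `[-m, m]`. -/
def lampBox (m : ℕ) : Set (ℤ →₀ Additive F) :=
  {u | ∀ x : ℤ, u x ≠ 0 → x ∈ Set.Icc (-(m : ℤ)) (m : ℤ)}

/-- The box Følner set: position in `[-m, m]`, lamps supported in `[-m, m]`. -/
def wBox (m : ℕ) : Set (WreathZ F) :=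
  {g | g.pos ∈ Set.Icc (-(m : ℤ)) (m : ℤ) ∧ g.lamp ∈ lampBox F m}

/-- Every element of the box is a product of at most `13m + 3` generators. -/
lemma wBox_subset_pow (m : ℕ) : wBox F m ⊆ wreathGen F ^ (13 * m + 3) := by
  rintro ⟨k, u⟩ ⟨hk, hu⟩
  simp only [Set.mem_Icc] at hk
  -- sweep parameters
  set A : ℤ := 2 * m with hA
  set T : ℕ := 4 * m + 1 with hT
  set d : ℤ := k - ((T : ℤ) - A) with hd
  set w : ℤ →₀ Additive F := shiftW F (-(A + k)) u with hw
  have hwsupp : ∀ x : ℤ, w x ≠ 0 → 0 ≤ x ∧ x < (T : ℤ) := by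
    intro x hx
    rw [hw, shiftW_apply] at hx
    have := hu _ hx
    simp only [Set.mem_Icc] at this
    simp only [hT, hA] at *
    push_cast
    omega
  have hdecomp : (⟨k, u⟩ : WreathZ F)
      = ⟨-A, 0⟩ * ⟨(T : ℤ), shiftW F T w⟩ * ⟨d, 0⟩ := by
    rw [WreathZ.mul_def, WreathZ.mul_def]
    ext
    · show k = -A + (T : ℤ) + d
      simp only [hd]; ring
    · show u _ = (shiftW F d (shiftW F (T : ℤ) 0 + shiftW F T w) + 0) _
      rw [map_zero, zero_add, add_zero, shiftW_shiftW, hw, shiftW_shiftW]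
      rw [show -(A + k) + ((T : ℤ) + d) = 0 by simp only [hd]; ring, shiftW_zero]
  rw [hdecomp]
  have h1 : (⟨-A, 0⟩ : WreathZ F) ∈ wreathGen F ^ (2 * m) := by
    have := walker_mem_pow F (-A)
    rwa [show (-A).natAbs = 2 * m by rw [hA]; omega] at this
  have h2 : (⟨(T : ℤ), shiftW F T w⟩ : WreathZ F) ∈ wreathGen F ^ (2 * T) :=
    sweep_mem_pow F T w hwsupp
  have h3 : (⟨d, 0⟩ : WreathZ F) ∈ wreathGen F ^ (3 * m + 1) := by
    have hw := walker_mem_pow F d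
    refine wreathGen_pow_mono F ?_ hw
    simp only [hd, hA, hT]
    push_cast
    omega
  have hsum' : 13 * m + 3 = 2 * m + 2 * T + (3 * m + 1) := by
    simp only [hT]; ring
  rw [hsum', pow_add, pow_add]
  exact Set.mul_mem_mul (Set.mul_mem_mul h1 h2) h3

/-- Slice of the box at a fixed position. -/
def wSlice (m : ℕ) (t : ℤ) : Set (WreathZ F) :=
  {g | g.pos = t ∧ g.lamp ∈ lampBox F m}

lemma lampBox_finite [Finite F] (m : ℕ) : (lampBox F m).Finite := by
  classical
  haveI : Finite (Additive F) := Finite.of_equiv F Additive.ofMul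
  haveI : Finite (Set.Icc (-(m : ℤ)) (m : ℤ)) := (Set.finite_Icc _ _).to_subtype
  rw [← Set.finite_coe_iff]
  apply Finite.of_injective
    (fun u : ↥(lampBox F m) => fun x : ↥(Set.Icc (-(m : ℤ)) (m : ℤ)) => u.1 x.1)
  intro u v huv
  apply Subtype.ext
  ext x
  by_cases hx : x ∈ Set.Icc (-(m : ℤ)) (m : ℤ)
  · exact congrFun huv ⟨x, hx⟩
  · have h1 : u.1 x = 0 := by by_contra h; exact hx (u.2 x h)
    have h2 : v.1 x = 0 := by by_contra h; exact hx (v.2 x h)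
    rw [h1, h2]

lemma lampBox_zero_mem (m : ℕ) : (0 : ℤ →₀ Additive F) ∈ lampBox F m :=
  fun x hx => absurd rfl hx

/-- The box is equivalent to the product of the interval and the lamp box. -/
def wBoxEquiv (m : ℕ) :
    ↥(wBox F m) ≃ ↥(Set.Icc (-(m : ℤ)) (m : ℤ)) × ↥(lampBox F m) where
  toFun g := (⟨g.1.pos, g.2.1⟩, ⟨g.1.lamp, g.2.2⟩)
  invFun p := ⟨⟨p.1.1, p.2.1⟩, p.1.2, p.2.2⟩
  left_inv g := rfl
  right_inv p := rfl

/-- The slice is equivalent to the lamp box. -/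
def wSliceEquiv (m : ℕ) (t : ℤ) : ↥(wSlice F m t) ≃ ↥(lampBox F m) where
  toFun g := ⟨g.1.lamp, g.2.2⟩
  invFun u := ⟨⟨t, u.1⟩, rfl, u.2⟩
  left_inv := by rintro ⟨⟨p, l⟩, rfl, hl⟩; rfl
  right_inv u := rfl

lemma wBox_finite [Finite F] (m : ℕ) : (wBox F m).Finite := by
  haveI : Finite (Set.Icc (-(m : ℤ)) (m : ℤ)) := (Set.finite_Icc _ _).to_subtype
  haveI : Finite ↥(lampBox F m) := (lampBox_finite F m).to_subtype
  rw [← Set.finite_coe_iff]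
  exact Finite.of_equiv _ (wBoxEquiv F m).symm

lemma wSlice_finite [Finite F] (m : ℕ) (t : ℤ) : (wSlice F m t).Finite := by
  haveI : Finite ↥(lampBox F m) := (lampBox_finite F m).to_subtype
  rw [← Set.finite_coe_iff]
  exact Finite.of_equiv _ (wSliceEquiv F m t).symm

lemma ncard_wSlice (m : ℕ) (t : ℤ) : (wSlice F m t).ncard = (lampBox F m).ncard := by
  rw [← Nat.card_coe_set_eq, ← Nat.card_coe_set_eq]
  exact Nat.card_congr (wSliceEquiv F m t)

lemma ncard_wBox (m : ℕ) :
    (wBox F m).ncard = (2 * m + 1) * (lampBox F m).ncard := by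
  have h := Nat.card_congr (wBoxEquiv F m)
  rw [Nat.card_prod] at h
  rw [← Nat.card_coe_set_eq, h, Nat.card_coe_set_eq, Nat.card_coe_set_eq]
  congr 1
  rw [← Finset.coe_Icc, Set.ncard_coe_finset, Int.card_Icc]
  omega

lemma wBox_nonempty (m : ℕ) : (wBox F m).Nonempty := by
  refine ⟨⟨0, 0⟩, ?_, lampBox_zero_mem F m⟩
  simp only [Set.mem_Icc]
  omega

lemma lampBox_ncard_pos [Finite F] (m : ℕ) : 0 < (lampBox F m).ncard :=
  (Set.ncard_pos (lampBox_finite F m)).mpr ⟨0, lampBox_zero_mem F m⟩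

/-- The box with `m = 0` consists of lamp generators only. -/
lemma wBox_zero_subset : wBox F 0 ⊆ wreathGen F := by
  rintro ⟨k, u⟩ ⟨hk, hu⟩
  simp only [Set.mem_Icc, Nat.cast_zero, neg_zero] at hk
  left
  refine ⟨show k = 0 by omega, fun x hx => ?_⟩
  by_contra h
  have := hu x h
  simp only [Set.mem_Icc, Nat.cast_zero, neg_zero, mul_zero] at this
  omega

/-- Left multiplication by a lamp generator preserves the box. -/
lemma lamp_mul_mem {m : ℕ} {s g : WreathZ F} (hpos : s.pos = 0)
    (hlamp : ∀ x : ℤ, x ≠ 0 → s.lamp x = 0) (hg : g ∈ wBox F m) :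
    s * g ∈ wBox F m := by
  obtain ⟨hg1, hg2⟩ := hg
  rw [WreathZ.mul_def]
  simp only [Set.mem_Icc] at hg1
  refine ⟨?_, ?_⟩
  · show s.pos + g.pos ∈ _
    rw [hpos, zero_add]
    simp only [Set.mem_Icc]; omega
  · intro x hx
    by_contra hxn
    have hxn' : ¬(-(m : ℤ) ≤ x ∧ x ≤ (m : ℤ)) := by
      intro h; exact hxn (Set.mem_Icc.mpr h)
    have h1 : g.lamp x = 0 := by
      by_contra h
      have := hg2 x h
      simp only [Set.mem_Icc] at this
      exact hxn' this
    have h2 : s.lamp (g.pos + x) = 0 := by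
      apply hlamp
      intro h0
      exact hxn' (by omega)
    apply hx
    show (shiftW F g.pos s.lamp + g.lamp) x = 0
    rw [Finsupp.add_apply, shiftW_apply, h1, h2, add_zero]

lemma lamp_image_eq {m : ℕ} {s : WreathZ F} (hpos : s.pos = 0)
    (hlamp : ∀ x : ℤ, x ≠ 0 → s.lamp x = 0) :
    (fun g => s * g) '' wBox F m = wBox F m := by
  apply Set.Subset.antisymm
  · rintro g ⟨h, hh, rfl⟩
    exact lamp_mul_mem F hpos hlamp hh
  · intro g hg
    refine ⟨s⁻¹ * g, ?_, by simp [mul_inv_cancel_left]⟩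
    apply lamp_mul_mem F
    · show (s⁻¹).pos = 0
      rw [WreathZ.inv_def, hpos]; rfl
    · intro x hx
      show (s⁻¹).lamp x = 0
      rw [WreathZ.inv_def]
      show (shiftW F (-s.pos) (-s.lamp)) x = 0
      rw [shiftW_apply, hpos, neg_zero, zero_add, Finsupp.neg_apply, hlamp x hx, neg_zero]
    · exact hg

lemma walker_mul {s g : WreathZ F} (hlamp : s.lamp = 0) :
    s * g = ⟨s.pos + g.pos, g.lamp⟩ := by
  rw [WreathZ.mul_def, hlamp, map_zero, zero_add]

lemma walker_inv {s : WreathZ F} (hlamp : s.lamp = 0) :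
    s⁻¹ = ⟨-s.pos, 0⟩ := by
  rw [WreathZ.inv_def, hlamp, neg_zero, map_zero]

lemma walker_symmDiff_subset {m : ℕ} {s : WreathZ F} (hlamp : s.lamp = 0)
    (hε : s.pos = 1 ∨ s.pos = -1) :
    ((fun g => s * g) '' wBox F m) ∆ (wBox F m)
      ⊆ wSlice F m (s.pos * ((m : ℤ) + 1)) ∪ wSlice F m (-s.pos * (m : ℤ)) := by
  intro g hg
  rw [Set.mem_symmDiff] at hg
  rcases hg with ⟨⟨h, hh, rfl⟩, hnot⟩ | ⟨hg, hnotim⟩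
  · left
    obtain ⟨hh1, hh2⟩ := hh
    simp only [Set.mem_Icc] at hh1
    have hsg : s * h = ⟨s.pos + h.pos, h.lamp⟩ := walker_mul F hlamp
    have hnot' : (⟨s.pos + h.pos, h.lamp⟩ : WreathZ F) ∉ wBox F m := by
      rw [← hsg]; exact hnot
    have hp : ¬(-(m : ℤ) ≤ s.pos + h.pos ∧ s.pos + h.pos ≤ (m : ℤ)) := by
      intro hc; exact hnot' ⟨Set.mem_Icc.mpr hc, hh2⟩
    show s * h ∈ wSlice F m _
    rw [hsg]
    refine ⟨?_, hh2⟩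
    show s.pos + h.pos = _
    rcases hε with h1 | h1 <;> rw [h1] at hp ⊢ <;> omega
  · right
    obtain ⟨hg1, hg2⟩ := hg
    simp only [Set.mem_Icc] at hg1
    refine ⟨?_, hg2⟩
    by_contra hne
    apply hnotim
    refine ⟨s⁻¹ * g, ?_, by simp [mul_inv_cancel_left]⟩
    rw [walker_inv F hlamp, WreathZ.mul_def, map_zero, zero_add]
    refine ⟨?_, hg2⟩
    show -s.pos + g.pos ∈ _
    simp only [Set.mem_Icc]
    rcases hε with h1 | h1 <;> rw [h1] at hne ⊢ <;> omega

end Aux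

/-- **Controlled Følner sequences in `F ≀ ℤ`.**
Let `F` be a nontrivial finite group and `G = F ≀ ℤ` with its standard generating set `S`.
Then there are `c > 0` and nonempty finite subsets `F_n ⊆ S^n` with
`|s·F_n △ F_n| ≤ c·|F_n|/n` for all `s ∈ S` and `n ≥ 1`: a controlled Følner sequence. -/
theorem stmt_13 (F : Type*) [Group F] [Finite F] [Nontrivial F] :
    ∃ c : ℝ, 0 < c ∧ ∃ Fo : ℕ → Set (WreathZ F),
      ∀ n : ℕ, 1 ≤ n → (Fo n).Finite ∧ (Fo n).Nonempty ∧ Fo n ⊆ wreathGen F ^ n ∧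
        ∀ s ∈ wreathGen F,
          (((((fun g => s * g) '' Fo n) ∆ Fo n).ncard : ℝ)) ≤ c * ((Fo n).ncard : ℝ) / n := by
  refine ⟨32, by norm_num, fun n => wBox F (n / 16), fun n hn => ?_⟩
  set m : ℕ := n / 16 with hm
  refine ⟨wBox_finite F m, wBox_nonempty F m, ?_, ?_⟩
  · -- containment in `S^n`
    show wBox F m ⊆ wreathGen F ^ n
    rcases le_or_gt 3 n with h3 | h3
    · refine (wBox_subset_pow F m).trans (wreathGen_pow_mono F ?_)
      omega
    · have hm0 : m = 0 := by omega
      rw [hm0]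
      refine Set.Subset.trans (wBox_zero_subset F) ?_
      refine Set.Subset.trans (by rw [pow_one]) (wreathGen_pow_mono F hn)
  · -- the Følner estimate
    intro s hs
    show (((((fun g => s * g) '' wBox F m) ∆ wBox F m).ncard : ℝ))
      ≤ 32 * ((wBox F m).ncard : ℝ) / n
    have hboxcard := ncard_wBox F m
    have hc0 : 0 < (lampBox F m).ncard := lampBox_ncard_pos F m
    have hnpos : (0 : ℝ) < (n : ℝ) := by exact_mod_cast hn
    have hmain : ∀ s' : WreathZ F, s'.pos = 0 → (∀ x : ℤ, x ≠ 0 → s'.lamp x = 0) →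
        (((((fun g => s' * g) '' wBox F m) ∆ wBox F m).ncard : ℝ))
          ≤ 32 * ((wBox F m).ncard : ℝ) / n := by
      intro s' h0 hl
      rw [lamp_image_eq F h0 hl, symmDiff_self]
      simp only [Set.bot_eq_empty, Set.ncard_empty, Nat.cast_zero]
      positivity
    rcases hs with ⟨hpos, hlamp⟩ | ⟨hlamp, hpos⟩
    · exact hmain s hpos hlamp
    · simp only [Set.mem_insert_iff, Set.mem_singleton_iff] at hpos
      rcases hpos with h1 | h1 | h1
      rotate_left
      · exact hmain s h1 (fun x _ => by simp [hlamp])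
      all_goals {
        have hsub := walker_symmDiff_subset F (m := m) hlamp (by omega)
        have hle : ((((fun g => s * g) '' wBox F m) ∆ wBox F m).ncard)
            ≤ 2 * (lampBox F m).ncard := by
          refine le_trans (Set.ncard_le_ncard hsub
            ((wSlice_finite F m _).union (wSlice_finite F m _))) ?_
          refine le_trans (Set.ncard_union_le _ _) ?_
          rw [ncard_wSlice, ncard_wSlice]
          omega
        rw [hboxcard, le_div_iff₀ hnpos]
        have hn16 : n ≤ 16 * (2 * m + 1) := by omega
        have A : ((((fun g => s * g) '' wBox F m) ∆ wBox F m).ncard : ℝ)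
            ≤ 2 * ((lampBox F m).ncard : ℝ) := by exact_mod_cast hle
        have B : (n : ℝ) ≤ 16 * (2 * (m : ℝ) + 1) := by exact_mod_cast hn16
        have C : (0 : ℝ) ≤ ((lampBox F m).ncard : ℝ) := by positivity
        have D : (0 : ℝ) ≤ 2 * (m : ℝ) + 1 := by positivity
        push_cast
        nlinarith [mul_nonneg C D]
      }
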